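/- arXiv:1506.06436 — 3 statements merged into one kernel-verified Lean document; each statement's English description precedes it below -/
import Mathlib

section
/- With Λ = λ(1) = (1 − z + z² + z³ − √(1 − 2z − z² − z⁴ + 2z⁵ + z⁶))/(2z), the kernel M(u,v) = 1 − zuv(1−z²)/((v−zu)(u−zv)) vanishes along the substitution v = uΛ, i.e. M(u,uΛ) = 0 as an identity of formal power series; by the symmetry M(u,v) = M(v,u) it also vanishes at (u,v) = (vΛ,v). -/
/-!
Clearing denominators, `M(u, uX) = -u² (zX² - c(1)X + z)` with `c(v) = 1 + z² - zv + z³v`,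
so `M(u, uΛ) = 0` is the defining equation of `Λ`; the content is that this quadratic has a
power series root, so that `λ` is not its junk value. Substituting `X = z/W` turns it into the
monic `W² - cW + z² = 0`, which Hensel's lemma solves in the `z`-adically complete ring
`R⟦z⟧` starting from `W ≡ c`, because `c` has unit constant coefficient.
-/

namespace PrudentAdsorption

/-- A point of the square lattice `ℤ²`. -/
abbrev Pt : Type := ℤ × ℤ

/-- Nearest-neighbour adjacency on the square lattice. -/
def adj (p q : Pt) : Prop := (q.1 - p.1).natAbs + (q.2 - p.2).natAbs = 1

/-- An `n`-step nearest-neighbour walk on `ℤ²` starting at the origin. -/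
structure Walk (n : ℕ) where
  pts : Fin (n + 1) → Pt
  start_eq : pts 0 = (0, 0)
  adj_step : ∀ k : Fin n, adj (pts k.castSucc) (pts k.succ)

namespace Walk

variable {n : ℕ}

/-- The `x`-coordinates of the prefix of the walk up to time `k`. -/
def xset (W : Walk n) (k : Fin (n + 1)) : Finset ℤ :=
  (Finset.Iic k).image fun m => (W.pts m).1

/-- The `y`-coordinates of the prefix of the walk up to time `k`. -/
def yset (W : Walk n) (k : Fin (n + 1)) : Finset ℤ :=
  (Finset.Iic k).image fun m => (W.pts m).2

lemma xset_nonempty (W : Walk n) (k : Fin (n + 1)) : (W.xset k).Nonempty :=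
  ⟨(W.pts k).1, Finset.mem_image.2 ⟨k, Finset.mem_Iic.2 le_rfl, rfl⟩⟩

lemma yset_nonempty (W : Walk n) (k : Fin (n + 1)) : (W.yset k).Nonempty :=
  ⟨(W.pts k).2, Finset.mem_image.2 ⟨k, Finset.mem_Iic.2 le_rfl, rfl⟩⟩

/-- Right side of the bounding box of the prefix up to time `k`. -/
def xmax (W : Walk n) (k : Fin (n + 1)) : ℤ := (W.xset k).max' (W.xset_nonempty k)

/-- Left (west) side of the bounding box of the prefix up to time `k`. -/
def xmin (W : Walk n) (k : Fin (n + 1)) : ℤ := (W.xset k).min' (W.xset_nonempty k)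

/-- Top (north) side of the bounding box of the prefix up to time `k`. -/
def ymax (W : Walk n) (k : Fin (n + 1)) : ℤ := (W.yset k).max' (W.yset_nonempty k)

/-- Bottom (south) side of the bounding box of the prefix up to time `k`. -/
def ymin (W : Walk n) (k : Fin (n + 1)) : ℤ := (W.yset k).min' (W.yset_nonempty k)

/-- Endpoint of the walk. -/
def endPt (W : Walk n) : Pt := W.pts (Fin.last n)

/-- A walk is prudent if it never takes a step towards an already visited vertex:
the half-line extending each step contains no previously visited vertex. -/
def Prudent (W : Walk n) : Prop :=
  ∀ k : Fin n, ∀ t : ℤ, 1 ≤ t → ∀ m : Fin (n + 1), m ≤ k.castSucc →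
    W.pts m ≠ W.pts k.castSucc + t • (W.pts k.succ - W.pts k.castSucc)

/-- The walk stays in the half-plane `y ≥ 0` above the impenetrable surface. -/
def HalfPlane (W : Walk n) : Prop := ∀ m : Fin (n + 1), 0 ≤ (W.pts m).2

/-- A walk is 2-sided if every prefix ends on the north or east side of
its bounding box. -/
def TwoSided (W : Walk n) : Prop :=
  ∀ k : Fin (n + 1), (W.pts k).2 = W.ymax k ∨ (W.pts k).1 = W.xmax k

/-- Every prefix ends on the north, east or west side of its bounding box. -/
def ThreeSidedEnds (W : Walk n) : Prop :=
  ∀ k : Fin (n + 1), (W.pts k).2 = W.ymax k ∨ (W.pts k).1 = W.xmax k ∨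
    (W.pts k).1 = W.xmin k

/-- The walk never steps between the SE and SW corners of its (current) bounding
box when the box has width one. -/
def NoBaseStep (W : Walk n) : Prop :=
  ∀ k : Fin n,
    ¬(W.xmax k.succ = W.xmin k.succ + 1 ∧
      (W.pts k.castSucc).2 = W.ymin k.succ ∧ (W.pts k.succ).2 = W.ymin k.succ ∧
      (((W.pts k.castSucc).1 = W.xmin k.succ ∧ (W.pts k.succ).1 = W.xmax k.succ) ∨
        ((W.pts k.castSucc).1 = W.xmax k.succ ∧ (W.pts k.succ).1 = W.xmin k.succ)))

/-- A walk is 3-sided if every prefix ends on the north, east or west side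
of its bounding box, and it never steps between the SE and SW corners of the
box when the box has width one. -/
def ThreeSided (W : Walk n) : Prop := W.ThreeSidedEnds ∧ W.NoBaseStep

/-- The number of steps of the walk lying along the surface `y = 0`. -/
def surfSteps (W : Walk n) : ℕ :=
  (Finset.univ.filter fun k : Fin n =>
    (W.pts k.castSucc).2 = 0 ∧ (W.pts k.succ).2 = 0).card

end Walk

/-- A 2-sided prudent walk above the impenetrable surface. -/
def Is2Sided {n : ℕ} (W : Walk n) : Prop := W.Prudent ∧ W.HalfPlane ∧ W.TwoSided

/-- A 3-sided prudent walk above the impenetrable surface. -/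
def Is3Sided {n : ℕ} (W : Walk n) : Prop := W.Prudent ∧ W.HalfPlane ∧ W.ThreeSided

/-- `R_{n,i,j,ν}`: number of `n`-step 2-sided prudent walks above the surface
ending on the right side of their bounding box, with `i` the distance from the
endpoint to the top of the box, `j` the height of the endpoint above the
surface and `ν` steps along the surface. -/
noncomputable def Rcount (n i j ν : ℕ) : ℕ :=
  Nat.card {W : Walk n // Is2Sided W ∧ (W.endPt).1 = W.xmax (Fin.last n) ∧
    W.ymax (Fin.last n) - (W.endPt).2 = (i : ℤ) ∧ (W.endPt).2 = (j : ℤ) ∧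
    W.surfSteps = ν}

/-- `T_{n,i,j,ν}`: number of `n`-step 2-sided prudent walks above the surface
ending on the top side of their bounding box, with `i` the distance from the
endpoint to the right of the box, `j` the height of the endpoint above the
surface and `ν` steps along the surface. -/
noncomputable def Tcount (n i j ν : ℕ) : ℕ :=
  Nat.card {W : Walk n // Is2Sided W ∧ (W.endPt).2 = W.ymax (Fin.last n) ∧
    W.xmax (Fin.last n) - (W.endPt).1 = (i : ℤ) ∧ (W.endPt).2 = (j : ℤ) ∧
    W.surfSteps = ν}

/-- `W_{n,i,j,ν}`: number of `n`-step 2-sided prudent walks above the surface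
ending a distance `i` from the NE corner of their bounding box and a distance
`j` above the surface, with `ν` steps along the surface. -/
noncomputable def Wcount (n i j ν : ℕ) : ℕ :=
  Nat.card {W : Walk n // Is2Sided W ∧
    (W.xmax (Fin.last n) - (W.endPt).1) + (W.ymax (Fin.last n) - (W.endPt).2) = (i : ℤ) ∧
    (W.endPt).2 = (j : ℤ) ∧ W.surfSteps = ν}

/-- The coefficient ring `ℤ[u,v,a]`. -/
abbrev A : Type := MvPolynomial (Fin 3) ℤ

/-- The ring of formal power series `ℤ[u,v,a][[z]]`. -/
abbrev S : Type := PowerSeries A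

/-- The series variable `z` (conjugate to the length). -/
noncomputable def zS : S := PowerSeries.X

/-- The catalytic variable `u`. -/
noncomputable def uS : S := PowerSeries.C (R := A) (MvPolynomial.X 0)

/-- The catalytic variable `v`. -/
noncomputable def vS : S := PowerSeries.C (R := A) (MvPolynomial.X 1)

/-- The surface fugacity `a`. -/
noncomputable def aS : S := PowerSeries.C (R := A) (MvPolynomial.X 2)

/-- Generating function `Σ c(n,i,j,ν) zⁿ Uⁱ Vʲ aᵛ` of a family of counts, with
the catalytic variables evaluated at power series `U`, `V`.  (Counts of `n`-step
walks vanish unless `i,j,ν ≤ n`, so the inner sums may be truncated at `n`, and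
the coefficient of `zᵐ` only receives contributions from `n ≤ m`.) -/
noncomputable def gf2 (c : ℕ → ℕ → ℕ → ℕ → ℕ) (U V : S) : S :=
  PowerSeries.mk fun m =>
    PowerSeries.coeff (R := A) m <|
      ∑ n ∈ Finset.range (m + 1), (PowerSeries.X : S) ^ n *
        ∑ i ∈ Finset.range (n + 1), ∑ j ∈ Finset.range (n + 1),
          ∑ ν ∈ Finset.range (n + 1),
            (c n i j ν : S) * U ^ i * V ^ j * aS ^ ν

/-- `R(U,V)`, the generating function of 2-sided prudent walks above the
surface ending on the right side of their bounding box. -/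
noncomputable def Rgf (U V : S) : S := gf2 Rcount U V

/-- `T(U,V)`, the generating function of 2-sided prudent walks above the
surface ending on the top side of their bounding box. -/
noncomputable def Tgf (U V : S) : S := gf2 Tcount U V

/-- `W(U,V)`, the generating function of all 2-sided prudent walks above the
surface, with `U` marking the distance from the endpoint to the NE corner. -/
noncomputable def Wgf (U V : S) : S := gf2 Wcount U V

/-- `c(v) = 1 + z² − zv + z³v`, so that the kernel quadratic is
`zX² − c(v)X + z = 0`. -/
noncomputable def ck (V : S) : S := 1 + zS ^ 2 - zS * V + zS ^ 3 * V

/-- `λ(v)`: the unique formal power series root of `zX² − c(v)X + z = 0`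
(defined as `0` if no such root exists). -/
noncomputable def lam (V : S) : S :=
  open scoped Classical in
  if h : ∃ X : S, zS * X ^ 2 - ck V * X + zS = 0 then h.choose else 0

/-- `Λ = λ(1)`. -/
noncomputable def Lam : S := lam 1

/-- Numerator of the kernel `L(u,v) = 1 − zuv(1−z²)/((u−z)(1−zu))` after
clearing the denominator `(u−z)(1−zu)`. -/
noncomputable def Ln (U V : S) : S := (U - zS) * (1 - zS * U) - zS * U * V * (1 - zS ^ 2)

/-- Numerator of the kernel `M(u,v) = 1 − zuv(1−z²)/((v−zu)(u−zv))` after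
clearing the denominator `(v−zu)(u−zv)`. -/
noncomputable def Mn (U V : S) : S := (V - zS * U) * (U - zS * V) - zS * U * V * (1 - zS ^ 2)

/-- Numerator of `A(u,v)`. -/
noncomputable def An (U V : S) : S :=
  V * (U - zS ^ 2 * U - zS * U * lam V * aS + zS ^ 2 * V * lam V * aS)

/-- Denominator of `A(u,v)`, namely `(u−zv)(v−zu)(1−zλ(v)a)`. -/
noncomputable def Ad (U V : S) : S := (U - zS * V) * (V - zS * U) * (1 - zS * lam V * aS)

/-- Numerator of `B(u,v)`. -/
noncomputable def Bn (U V : S) : S :=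
  -(zS * U) * (U + V - zS * V - zS ^ 2 * V - V * aS + zS ^ 2 * V * aS)

/-- Denominator of `B(u,v)`, namely `(u−zv)(v−zu)`. -/
noncomputable def Bd (U V : S) : S := (U - zS * V) * (V - zS * U)

/-- Numerator of `C(u,v)`. -/
noncomputable def Cn (U V : S) : S := -(zS * V) * (zS * U - U * lam V + zS * V * lam V)

/-- Denominator of `C(u,v)`, namely `(λ(v)−z)(u−zv)`. -/
noncomputable def Cd (U V : S) : S := (lam V - zS) * (U - zS * V)

/-- `𝒥(a) = 1 + Λ − zΛ − z²Λ − Λa + z²Λa`. -/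
noncomputable def Jc : S := 1 + Lam - zS * Lam - zS ^ 2 * Lam - Lam * aS + zS ^ 2 * Lam * aS

/-- Numerator of `ℋ(q)`. -/
noncomputable def Hnum (q : S) : S :=
  (1 - zS ^ 2) * (1 - Lam ^ 2) *
    (1 - zS * aS * (1 + zS) * lam (q * Lam) + zS * aS * lam (q * Lam) ^ 2)

/-- Denominator of `ℋ(q)`, including the factor `𝒥(a)`. -/
noncomputable def Hden (q : S) : S :=
  Jc * ((1 - zS * Lam) * (1 - zS * aS * lam (q * Lam)) *
    (1 - (1 - zS - zS ^ 2 + Lam) * lam (q * Lam)))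

/-- Numerator of `ℐ(q)`. -/
noncomputable def Inum (q : S) : S :=
  (Lam - zS) * (1 - zS - zS ^ 2 - aS + zS ^ 2 * aS + Lam) *
    (zS - (1 - zS * Lam) * lam (q * Lam))

/-- Denominator of `ℐ(q)`, including the factor `𝒥(a)`. -/
noncomputable def Iden (q : S) : S :=
  Jc * (zS * (1 - zS * Lam) * (1 - (1 - zS - zS ^ 2 + Lam) * lam (q * Lam)))

end PrudentAdsorption

namespace PowerSeries

variable {R : Type*} [CommRing R]

theorem exists_isUnit_sq_sub_mul_add_X_sq_eq_zero {c : R⟦X⟧} (hc : IsUnit c) :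
    ∃ W : R⟦X⟧, IsUnit W ∧ W ^ 2 - c * W + X ^ 2 = 0 := by
  let f : Polynomial R⟦X⟧ :=
    Polynomial.X ^ 2 - Polynomial.C c * Polynomial.X + Polynomial.C (X ^ 2)
  have hf : f.Monic := by unfold f; monicity!
  have hfc : f.eval c ∈ Ideal.span {(X : R⟦X⟧)} := by
    have : f.eval c = X * X := by simp [f, sq]
    rw [this]
    exact Ideal.mul_mem_right _ _ (Ideal.subset_span rfl)
  have hf'c : IsUnit (Ideal.Quotient.mk (Ideal.span {(X : R⟦X⟧)}) (f.derivative.eval c)) := by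
    have : f.derivative.eval c = c := by
      simp only [f, Polynomial.derivative_add, Polynomial.derivative_C, add_zero]
      simp [add_mul]
    rw [this]
    exact hc.map _
  obtain ⟨W, hroot, hWc⟩ := HenselianRing.is_henselian f hf c hfc hf'c
  have hWc' : constantCoeff W = constantCoeff c := by
    rw [← sub_eq_zero, ← map_sub, ← X_dvd_iff, ← Ideal.mem_span_singleton]
    exact hWc
  refine ⟨W, ?_, by simpa [f] using hroot⟩
  exact isUnit_iff_constantCoeff.2 (hWc' ▸ isUnit_iff_constantCoeff.1 hc)

theorem exists_X_mul_sq_sub_mul_add_X_eq_zero {c : R⟦X⟧} (hc : IsUnit (constantCoeff c)) :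
    ∃ L : R⟦X⟧, X * L ^ 2 - c * L + X = 0 := by
  obtain ⟨W, hW, hroot⟩ :=
    exists_isUnit_sq_sub_mul_add_X_sq_eq_zero (isUnit_iff_constantCoeff.2 hc)
  obtain ⟨w, rfl⟩ := hW
  refine ⟨X * (↑w⁻¹ : R⟦X⟧), ?_⟩
  have hinv : (↑w⁻¹ : R⟦X⟧) * w - 1 = 0 := by simp
  linear_combination (X * (↑w⁻¹ : R⟦X⟧) ^ 2) * hroot
    + (c * X * ↑w⁻¹ - X * (↑w⁻¹ * ↑w + 1)) * hinv

end PowerSeries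

namespace PrudentAdsorption

open PowerSeries

theorem constantCoeff_ck (V : S) : constantCoeff (ck V) = 1 := by
  simp [ck, zS]

theorem lam_spec (V : S) : zS * lam V ^ 2 - ck V * lam V + zS = 0 := by
  have hroot : ∃ X : S, zS * X ^ 2 - ck V * X + zS = 0 :=
    exists_X_mul_sq_sub_mul_add_X_eq_zero (by rw [constantCoeff_ck]; exact isUnit_one)
  rw [lam, dif_pos hroot]
  exact hroot.choose_spec

theorem Mn_comm (U V : S) : Mn U V = Mn V U := by
  simp only [Mn]; ring

theorem Mn_mul_right (U X : S) : Mn U (U * X) = -U ^ 2 * (zS * X ^ 2 - ck 1 * X + zS) := by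
  simp only [Mn, ck]; ring

/-- With `Λ = λ(1)`, the kernel `M(u,v)` vanishes along the
substitution `v = uΛ` (after clearing denominators, `Mn(u,uΛ) = 0`); `M` is
symmetric, `M(u,v) = M(v,u)`, and hence it also vanishes at `(u,v) = (vΛ,v)`. -/
theorem kernel_M_vanishes :
    Mn uS (uS * Lam) = 0 ∧ (∀ U V : S, Mn U V = Mn V U) ∧
    Mn (vS * Lam) vS = 0 := by
  have hM : ∀ U : S, Mn U (U * Lam) = 0 := fun U => by
    rw [Mn_mul_right, Lam, lam_spec, mul_zero]
  exact ⟨hM uS, Mn_comm, Mn_comm _ _ ▸ hM vS⟩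

end PrudentAdsorption
end

section
/- The series ℋ(u) is a formal power series in z with coefficients in ℤ[u,a] of the form ℋ(u) = 1 + za + O(z²), and ℐ(u) is a formal power series in z with coefficients in ℤ[u,a] of the form ℐ(u) = z⁴(1 − a − u + ua) + O(z⁵); consequently the sum Σ_{n=0}^∞ ℋ(uΛ^{2n}) · Π_{k=0}^{n−1} ℐ(uΛ^{2k}) converges as a formal power series in z with coefficients in ℤ[u,a]. -/
/-! The kernel equation `zX² − c(v)X + z = 0` says that `λ(v)` is a fixed point of the map
`L ↦ z(1 + (v − z − z²v)L + L²)`, which is a contraction for the `z`-adic topology; reading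
coefficients off this equation gives `Λ = z + z² + O(z³)` and `λ(uΛ) = z + uz³ + O(z⁴)`.
Leading terms multiply, so the numerator of `ℐ(u)` is
`(Λ − z)(1 − a + O(z))((1 − u)z³ + O(z⁴)) = (1 − a)(1 − u)z⁵ + O(z⁶)`, while its denominator is
`z` times a unit; for `ℋ(u)` first-order expansions suffice. Every `ℐ(q)` is divisible by `z`,
so the `n`-th term of the series is `O(zⁿ)`. -/

namespace PowerSeries

variable {R : Type*} [CommRing R]

theorem exists_fixedPoint_of_X_pow_dvd_sub (Φ : R⟦X⟧ → R⟦X⟧)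
    (hΦ : ∀ n f g, X ^ n ∣ f - g → X ^ (n + 1) ∣ Φ f - Φ g) : ∃ L, Φ L = L := by
  have step (k : ℕ) : X ^ k ∣ Φ^[k + 1] 0 - Φ^[k] 0 := by
    induction k with
    | zero => simp
    | succ k ih => simpa only [Function.iterate_succ_apply'] using hΦ _ _ _ ih
  have cauchy (k j : ℕ) : X ^ k ∣ Φ^[k + j] 0 - Φ^[k] 0 := by
    induction j with
    | zero => simp
    | succ j ih =>
      have := (pow_dvd_pow X (Nat.le_add_right k j)).trans (step (k + j))
      simpa [← add_assoc] using dvd_add this ih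
  set L : R⟦X⟧ := mk fun n => coeff n (Φ^[n + 1] 0)
  have approx (k : ℕ) : X ^ k ∣ L - Φ^[k] 0 := by
    refine X_pow_dvd_iff.2 fun m hm => ?_
    obtain ⟨j, rfl⟩ := Nat.exists_eq_add_of_lt hm
    have := X_pow_dvd_iff.1 (cauchy (m + 1) j) m (lt_add_one m)
    rw [map_sub, sub_eq_zero] at this
    rw [map_sub, sub_eq_zero, coeff_mk, add_right_comm, this]
  refine ⟨L, ext fun n => ?_⟩
  have := X_pow_dvd_iff.1 (dvd_sub (hΦ _ _ _ (approx n)) (approx (n + 1))) n (lt_add_one n)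
  rwa [← Function.iterate_succ_apply' Φ, sub_sub_sub_cancel_right, map_sub, sub_eq_zero] at this

theorem coeff_sum_range_eq_of_X_pow_dvd (f : ℕ → R⟦X⟧) (hf : ∀ n, X ^ n ∣ f n)
    {m N : ℕ} (hmN : m ≤ N) :
    coeff m (∑ n ∈ Finset.range (N + 1), f n) = coeff m (∑ n ∈ Finset.range (m + 1), f n) := by
  rw [← Finset.sum_range_add_sum_Ico _ (Nat.succ_le_succ hmN), map_add, add_eq_left, map_sum]
  exact Finset.sum_eq_zero fun n hn => X_pow_dvd_iff.1 (hf n) m (Finset.mem_Ico.1 hn).1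

/-- `f = c Xⁿ + O(Xⁿ⁺¹)`. -/
def EqMonomialAddO (f : R⟦X⟧) (n : ℕ) (c : R) : Prop := X ^ (n + 1) ∣ f - C c * X ^ n

theorem eqMonomialAddO_iff {f : R⟦X⟧} {n : ℕ} {c : R} :
    EqMonomialAddO f n c ↔ (∀ k < n, coeff k f = 0) ∧ coeff n f = c := by
  simp only [EqMonomialAddO, X_pow_dvd_iff, map_sub, coeff_C_mul_X_pow, Nat.lt_succ_iff,
    sub_eq_zero]
  constructor
  · intro h
    exact ⟨fun k hk => by simpa [hk.ne] using h k hk.le, by simpa using h n le_rfl⟩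
  · rintro ⟨hlt, hn⟩ k hk
    rcases hk.lt_or_eq with hk | rfl
    · simp [hk.ne, hlt k hk]
    · simp [hn]

theorem eqMonomialAddO_zero_iff {f : R⟦X⟧} {c : R} :
    EqMonomialAddO f 0 c ↔ constantCoeff f = c := by
  simp [eqMonomialAddO_iff]

theorem eqMonomialAddO_X : EqMonomialAddO (X : R⟦X⟧) 1 1 := by
  simp [EqMonomialAddO]

namespace EqMonomialAddO

variable {f g : R⟦X⟧} {m n : ℕ} {c d : R}

theorem X_pow_dvd (h : EqMonomialAddO f n c) : X ^ n ∣ f := by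
  have := (pow_dvd_pow X n.le_succ).trans h
  simpa using dvd_add this (dvd_mul_left (X ^ n) (C c))

theorem mul (hf : EqMonomialAddO f m c) (hg : EqMonomialAddO g n d) :
    EqMonomialAddO (f * g) (m + n) (c * d) := by
  obtain ⟨f', hf'⟩ := hf
  obtain ⟨g', hg'⟩ := hg
  refine ⟨C c * g' + f' * C d + X * f' * g', ?_⟩
  rw [map_mul]
  linear_combination g * hf' + (C c * X ^ m + X ^ (m + 1) * f') * hg'

theorem sub (hf : EqMonomialAddO f n c) (hg : EqMonomialAddO g n d) :
    EqMonomialAddO (f - g) n (c - d) := by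
  simpa [EqMonomialAddO, sub_mul, sub_sub_sub_comm] using dvd_sub hf hg

theorem of_X_mul (h : EqMonomialAddO (X * f) (n + 1) c) : EqMonomialAddO f n c := by
  obtain ⟨r, hr⟩ := h
  exact ⟨r, X_mul_cancel (by linear_combination hr)⟩

theorem of_mul_left (hf : constantCoeff f = 1) (h : EqMonomialAddO (f * g) n c) :
    EqMonomialAddO g n c := by
  obtain ⟨u, rfl⟩ := isUnit_iff_constantCoeff.2 (hf ▸ isUnit_one)
  have hu : EqMonomialAddO (↑u⁻¹ : R⟦X⟧) 0 1 := by
    have := congrArg constantCoeff u.inv_mul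
    rwa [map_mul, hf, mul_one, map_one, ← eqMonomialAddO_zero_iff] at this
  simpa [← mul_assoc] using hu.mul h

end EqMonomialAddO

end PowerSeries

namespace PrudentAdsorption

open PowerSeries

theorem exists_kernel_root (V : S) : ∃ L : S, zS * L ^ 2 - ck V * L + zS = 0 := by
  obtain ⟨L, hL⟩ := exists_fixedPoint_of_X_pow_dvd_sub
    (fun L : S => X * (1 + (V - X - X ^ 2 * V) * L + L ^ 2)) fun n f g hfg => by
      have : X * (1 + (V - X - X ^ 2 * V) * f + f ^ 2) - X * (1 + (V - X - X ^ 2 * V) * g + g ^ 2)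
          = X * ((V - X - X ^ 2 * V + f + g) * (f - g)) := by ring
      rw [this, pow_succ']
      exact mul_dvd_mul_left X (dvd_mul_of_dvd_right hfg _)
  exact ⟨L, by rw [ck, zS]; linear_combination hL⟩

theorem lam_eq_X_mul (V : S) : lam V = X * (1 + (V - X - X ^ 2 * V) * lam V + lam V ^ 2) := by
  have h : zS * lam V ^ 2 - ck V * lam V + zS = 0 := by
    rw [lam, dif_pos (exists_kernel_root V)]
    exact (exists_kernel_root V).choose_spec
  rw [ck, zS] at h
  linear_combination -h

theorem constantCoeff_lam (V : S) : constantCoeff (lam V) = 0 := by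
  rw [lam_eq_X_mul]; simp

theorem coeff_one_lam (V : S) : coeff 1 (lam V) = 1 := by
  rw [lam_eq_X_mul, coeff_succ_X_mul]; simp [constantCoeff_lam]

theorem coeff_two_lam (V : S) : coeff 2 (lam V) = constantCoeff V := by
  rw [lam_eq_X_mul, coeff_succ_X_mul]
  simp [coeff_one_mul, coeff_one_pow, constantCoeff_lam, coeff_one_lam]

theorem coeff_three_lam (V : S) : coeff 3 (lam V) = constantCoeff V ^ 2 + coeff 1 V := by
  rw [lam_eq_X_mul, coeff_succ_X_mul]
  simp [coeff_mul, pow_two, Finset.Nat.antidiagonal_succ, constantCoeff_lam, coeff_one_lam,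
    coeff_two_lam]
  ring

theorem lam_eqMonomialAddO (V : S) : EqMonomialAddO (lam V) 1 1 :=
  eqMonomialAddO_iff.2 ⟨by simp [constantCoeff_lam], coeff_one_lam V⟩

theorem lam_sub_X_eqMonomialAddO (V : S) : EqMonomialAddO (lam V - X) 2 (constantCoeff V) := by
  refine eqMonomialAddO_iff.2 ⟨fun k hk => ?_, by simp [coeff_two_lam, coeff_X]⟩
  interval_cases k <;> simp [constantCoeff_lam, coeff_one_lam]

theorem lam_sub_X_eqMonomialAddO_of_constantCoeff_eq_zero {V : S} (hV : constantCoeff V = 0) :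
    EqMonomialAddO (lam V - X) 3 (coeff 1 V) := by
  refine eqMonomialAddO_iff.2 ⟨fun k hk => ?_, by simp [coeff_three_lam, coeff_X, hV]⟩
  interval_cases k <;> simp [constantCoeff_lam, coeff_one_lam, coeff_two_lam, coeff_X, hV]

local notation "u" => (MvPolynomial.X 0 : A)
local notation "a" => (MvPolynomial.X 2 : A)

theorem Lam_sub_X_eqMonomialAddO : EqMonomialAddO (Lam - X) 2 1 := by
  simpa [Lam] using lam_sub_X_eqMonomialAddO (1 : S)

theorem lam_uS_mul_Lam_sub_X_eqMonomialAddO : EqMonomialAddO (lam (uS * Lam) - X) 3 u := by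
  simpa [uS, Lam, constantCoeff_lam, coeff_one_lam] using
    lam_sub_X_eqMonomialAddO_of_constantCoeff_eq_zero (V := uS * Lam)
      (by simp [uS, Lam, constantCoeff_lam])

theorem constantCoeff_Jc : constantCoeff Jc = 1 := by
  simp [Jc, Lam, zS, constantCoeff_lam]

theorem Inum_eq_mul (q : S) :
    Inum q = (Lam - X) * (1 - X - X ^ 2 - aS + X ^ 2 * aS + Lam) *
      (X * Lam * lam (q * Lam) - (lam (q * Lam) - X)) := by
  rw [Inum, zS]; ring

theorem Inum_eqMonomialAddO {q : S} {n : ℕ} {c : A}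
    (h : EqMonomialAddO (X * Lam * lam (q * Lam) - (lam (q * Lam) - X)) n c) :
    EqMonomialAddO (Inum q) (2 + n) ((1 - a) * c) := by
  have hB : EqMonomialAddO (1 - X - X ^ 2 - aS + X ^ 2 * aS + Lam) 0 (1 - a) := by
    simp [eqMonomialAddO_zero_iff, aS, Lam, constantCoeff_lam]
  have := (Lam_sub_X_eqMonomialAddO.mul hB).mul h
  rwa [one_mul, add_zero, ← Inum_eq_mul] at this

theorem eqMonomialAddO_of_Iden_mul_eq {q I : S} (hI : Iden q * I = Inum q) {n : ℕ} {c : A}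
    (h : EqMonomialAddO (Inum q) (n + 1) c) : EqMonomialAddO I n c := by
  set E := Jc * ((1 - X * Lam) * (1 - (1 - X - X ^ 2 + Lam) * lam (q * Lam)))
  have hE : constantCoeff E = 1 := by simp [E, constantCoeff_Jc, Lam, constantCoeff_lam]
  rw [← hI, show Iden q = X * E by rw [Iden, zS]; ring, mul_assoc] at h
  exact h.of_X_mul.of_mul_left hE

theorem eqMonomialAddO_of_Iden_uS_mul_eq {I : S} (hI : Iden uS * I = Inum uS) :
    EqMonomialAddO I 4 ((1 - a) * (1 - u)) := by
  have hT : EqMonomialAddO (X * Lam * lam (uS * Lam) - (lam (uS * Lam) - X)) 3 (1 - u) := by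
    have := (eqMonomialAddO_X.mul (lam_eqMonomialAddO 1)).mul (lam_eqMonomialAddO (uS * Lam))
    simpa [Lam] using this.sub lam_uS_mul_Lam_sub_X_eqMonomialAddO
  have hInum := Inum_eqMonomialAddO hT
  exact eqMonomialAddO_of_Iden_mul_eq hI hInum

theorem X_dvd_of_Iden_mul_eq {q I : S} (hI : Iden q * I = Inum q) : X ∣ I := by
  have hT : EqMonomialAddO (X * Lam * lam (q * Lam) - (lam (q * Lam) - X)) 0 0 := by
    simp [eqMonomialAddO_zero_iff, Lam, constantCoeff_lam]
  have hInum : EqMonomialAddO (Inum q) (1 + 1) 0 := by simpa using Inum_eqMonomialAddO hT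
  simpa using (eqMonomialAddO_of_Iden_mul_eq hI hInum).X_pow_dvd

theorem constantCoeff_Hden (q : S) : constantCoeff (Hden q) = 1 := by
  simp [Hden, zS, aS, Lam, constantCoeff_Jc, constantCoeff_lam]

theorem coeff_one_Hden (q : S) : coeff 1 (Hden q) = -a := by
  simp [Hden, Jc, zS, aS, Lam, coeff_one_mul, constantCoeff_lam, coeff_one_lam]
  ring

theorem constantCoeff_Hnum (q : S) : constantCoeff (Hnum q) = 1 := by
  simp [Hnum, zS, aS, Lam, constantCoeff_lam]

theorem coeff_one_Hnum (q : S) : coeff 1 (Hnum q) = 0 := by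
  simp [Hnum, zS, aS, Lam, coeff_one_mul, coeff_one_pow, constantCoeff_lam, coeff_one_lam]

theorem coeff_of_Hden_mul_eq {q H : S} (hH : Hden q * H = Hnum q) :
    coeff 0 H = 1 ∧ coeff 1 H = a := by
  have h0 := congrArg constantCoeff hH
  have h1 := congrArg (coeff 1) hH
  rw [map_mul, constantCoeff_Hden, constantCoeff_Hnum, one_mul] at h0
  rw [coeff_one_mul, coeff_one_Hden, coeff_one_Hnum, constantCoeff_Hden, h0] at h1
  exact ⟨by simpa using h0, by linear_combination h1⟩

/-- `ℋ(u)` is a formal power series in `z` with coefficients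
in `ℤ[u,a]` of the form `1 + za + O(z²)`, and `ℐ(u)` is of the form
`z⁴(1 − a − u + ua) + O(z⁵)`; consequently the partial sums of
`Σ_{n≥0} ℋ(uΛ^{2n}) Π_{k<n} ℐ(uΛ^{2k})` stabilise coefficientwise, i.e. the sum
converges as a formal power series.  Here `Hf`, `If` denote the series `ℋ`,
`ℐ`, characterised by the cleared-denominator identities. -/
theorem H_I_orders_and_convergence (Hf If : S → S)
    (hH : ∀ q : S, Hden q * Hf q = Hnum q)
    (hI : ∀ q : S, Iden q * If q = Inum q) :
    PowerSeries.coeff (R := A) 0 (Hf uS) = 1 ∧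
    PowerSeries.coeff (R := A) 1 (Hf uS) = MvPolynomial.X 2 ∧
    (∀ k : ℕ, k < 4 → PowerSeries.coeff (R := A) k (If uS) = 0) ∧
    PowerSeries.coeff (R := A) 4 (If uS)
      = 1 - MvPolynomial.X 2 - MvPolynomial.X 0 +
          MvPolynomial.X 0 * MvPolynomial.X 2 ∧
    (∀ m N : ℕ, m ≤ N →
      PowerSeries.coeff (R := A) m (∑ n ∈ Finset.range (N + 1),
          Hf (uS * Lam ^ (2 * n)) * ∏ k ∈ Finset.range n, If (uS * Lam ^ (2 * k)))
        = PowerSeries.coeff (R := A) m (∑ n ∈ Finset.range (m + 1),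
          Hf (uS * Lam ^ (2 * n)) * ∏ k ∈ Finset.range n, If (uS * Lam ^ (2 * k)))) := by
  obtain ⟨hH0, hH1⟩ := coeff_of_Hden_mul_eq (hH uS)
  obtain ⟨hIlt, hI4⟩ := eqMonomialAddO_iff.1 (eqMonomialAddO_of_Iden_uS_mul_eq (hI uS))
  refine ⟨hH0, hH1, hIlt, by rw [hI4]; ring, fun m N hmN => ?_⟩
  refine coeff_sum_range_eq_of_X_pow_dvd _ (fun n => Dvd.dvd.mul_left ?_ _) hmN
  simpa using Finset.prod_dvd_prod_of_dvd (s := Finset.range n) (fun _ => X) _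
    fun k _ => X_dvd_of_Iden_mul_eq (hI _)

end PrudentAdsorption
end

section
/- Every prudent walk on ℤ² that starts at a point on the line y = 0 and is confined to the half-plane y ≥ 0 ends on the north, east or west side of its bounding box; that is, its endpoint is never strictly in the interior of the south side of the bounding box. In particular, every 4-sided prudent walk above an impenetrable surface is also a 3-sided prudent walk. -/
/-! By induction on time, every new vertex lies weakly beyond the north, east or west side of
the previous bounding box. A step can only fail to do so if it goes south from the interior of
the north side, or east (west) from the west (east) side strictly below the top. In the first
case the walk, having reached both the west and the east side, crossed the vertical line
through the current vertex below it; in the second it crossed the horizontal line through the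
current vertex, which lies above the surface, on its way from the origin up to the top, and
necessarily to the east (west) of the current vertex. Either way the step points towards a
visited vertex, which prudence forbids. -/

namespace PrudentAdsorption

section DiscreteIVT

variable {n : ℕ} {f : Fin (n + 1) → ℤ}

lemma exists_lt_apply_eq_of_le_of_lt (hf : ∀ k : Fin n, |f k.succ - f k.castSucc| ≤ 1)
    {a b : Fin (n + 1)} {c : ℤ} (hab : a ≤ b) (ha : f a ≤ c) (hb : c < f b) :
    ∃ j < b, f j = c := by
  induction b using Fin.induction with
  | zero =>
    rw [Fin.le_zero_iff.1 hab] at ha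
    exact (lt_irrefl _ (ha.trans_lt hb)).elim
  | succ k ih =>
    rcases hab.lt_or_eq with hlt | rfl
    · by_cases hc : c < f k.castSucc
      · obtain ⟨j, hj, hfj⟩ := ih (Fin.le_castSucc_iff.2 hlt) hc
        exact ⟨j, hj.trans Fin.castSucc_lt_succ, hfj⟩
      · have hk := abs_le.1 (hf k)
        exact ⟨k.castSucc, Fin.castSucc_lt_succ, by omega⟩
    · exact (lt_irrefl _ (ha.trans_lt hb)).elim

lemma exists_lt_apply_eq_of_lt_of_lt (hf : ∀ k : Fin n, |f k.succ - f k.castSucc| ≤ 1)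
    {a b k : Fin (n + 1)} {c : ℤ} (ha : a ≤ k) (hb : b ≤ k) (hac : f a < c) (hcb : c < f b) :
    ∃ j < k, f j = c := by
  rcases le_total a b with hab | hba
  · obtain ⟨j, hj, hfj⟩ := exists_lt_apply_eq_of_le_of_lt hf hab hac.le hcb
    exact ⟨j, hj.trans_le hb, hfj⟩
  · have hf' (k : Fin n) : |-f k.succ - -f k.castSucc| ≤ 1 := by
      rw [neg_sub_neg, abs_sub_comm]
      exact hf k
    obtain ⟨j, hj, hfj⟩ := exists_lt_apply_eq_of_le_of_lt (f := fun i => -f i) hf' hba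
      (neg_le_neg hcb.le) (neg_lt_neg hac)
    exact ⟨j, hj.trans_le ha, neg_inj.1 hfj⟩

end DiscreteIVT

lemma adj_iff_sub_eq {p q : Pt} :
    adj p q ↔ q - p = (1, 0) ∨ q - p = (-1, 0) ∨ q - p = (0, 1) ∨ q - p = (0, -1) := by
  simp only [adj, Prod.ext_iff, Prod.fst_sub, Prod.snd_sub]
  omega

lemma Fin.Iic_succ {n : ℕ} (k : Fin n) :
    Finset.Iic k.succ = insert k.succ (Finset.Iic k.castSucc) := by
  ext m
  simp only [Finset.mem_Iic, Finset.mem_insert, Fin.le_castSucc_iff]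
  exact le_iff_eq_or_lt

namespace Walk

variable {n : ℕ} (W : Walk n)

lemma abs_sub_fst_le_one (k : Fin n) : |(W.pts k.succ).1 - (W.pts k.castSucc).1| ≤ 1 := by
  have := W.adj_step k
  rw [adj] at this
  rw [Int.abs_eq_natAbs]
  omega

lemma abs_sub_snd_le_one (k : Fin n) : |(W.pts k.succ).2 - (W.pts k.castSucc).2| ≤ 1 := by
  have := W.adj_step k
  rw [adj] at this
  rw [Int.abs_eq_natAbs]
  omega

variable {W}

lemma mem_xset {m k : Fin (n + 1)} (h : m ≤ k) : (W.pts m).1 ∈ W.xset k :=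
  Finset.mem_image.2 ⟨m, Finset.mem_Iic.2 h, rfl⟩

lemma mem_yset {m k : Fin (n + 1)} (h : m ≤ k) : (W.pts m).2 ∈ W.yset k :=
  Finset.mem_image.2 ⟨m, Finset.mem_Iic.2 h, rfl⟩

lemma le_xmax {m k : Fin (n + 1)} (h : m ≤ k) : (W.pts m).1 ≤ W.xmax k :=
  Finset.le_max' _ _ (mem_xset h)

lemma xmin_le {m k : Fin (n + 1)} (h : m ≤ k) : W.xmin k ≤ (W.pts m).1 :=
  Finset.min'_le _ _ (mem_xset h)

lemma le_ymax {m k : Fin (n + 1)} (h : m ≤ k) : (W.pts m).2 ≤ W.ymax k :=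
  Finset.le_max' _ _ (mem_yset h)

variable (W)

lemma exists_fst_eq_xmax (k : Fin (n + 1)) : ∃ m ≤ k, (W.pts m).1 = W.xmax k := by
  obtain ⟨m, hm, he⟩ := Finset.mem_image.1 ((W.xset k).max'_mem (W.xset_nonempty k))
  exact ⟨m, Finset.mem_Iic.1 hm, he⟩

lemma exists_fst_eq_xmin (k : Fin (n + 1)) : ∃ m ≤ k, (W.pts m).1 = W.xmin k := by
  obtain ⟨m, hm, he⟩ := Finset.mem_image.1 ((W.xset k).min'_mem (W.xset_nonempty k))
  exact ⟨m, Finset.mem_Iic.1 hm, he⟩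

lemma exists_snd_eq_ymax (k : Fin (n + 1)) : ∃ m ≤ k, (W.pts m).2 = W.ymax k := by
  obtain ⟨m, hm, he⟩ := Finset.mem_image.1 ((W.yset k).max'_mem (W.yset_nonempty k))
  exact ⟨m, Finset.mem_Iic.1 hm, he⟩

lemma ymax_zero : W.ymax 0 = (W.pts 0).2 := by
  simp [ymax, yset, ← bot_eq_zero]

lemma xset_succ (k : Fin n) : W.xset k.succ = insert (W.pts k.succ).1 (W.xset k.castSucc) := by
  simp only [xset, Fin.Iic_succ, Finset.image_insert]

lemma yset_succ (k : Fin n) : W.yset k.succ = insert (W.pts k.succ).2 (W.yset k.castSucc) := by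
  simp only [yset, Fin.Iic_succ, Finset.image_insert]

lemma xmax_succ (k : Fin n) : W.xmax k.succ = max (W.pts k.succ).1 (W.xmax k.castSucc) := by
  unfold xmax
  rw [← Finset.max'_insert]
  congr 1
  exact W.xset_succ k

lemma xmin_succ (k : Fin n) : W.xmin k.succ = min (W.pts k.succ).1 (W.xmin k.castSucc) := by
  unfold xmin
  rw [← Finset.min'_insert]
  congr 1
  exact W.xset_succ k

lemma ymax_succ (k : Fin n) : W.ymax k.succ = max (W.pts k.succ).2 (W.ymax k.castSucc) := by
  unfold ymax
  rw [← Finset.max'_insert]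
  congr 1
  exact W.yset_succ k

lemma exists_lt_snd_eq {k : Fin (n + 1)} {c : ℤ} (hc₀ : 0 ≤ c) (hc : c < W.ymax k) :
    ∃ j < k, (W.pts j).2 = c := by
  obtain ⟨m, hmk, hm⟩ := W.exists_snd_eq_ymax k
  obtain ⟨j, hjm, hj⟩ := exists_lt_apply_eq_of_le_of_lt (f := fun i => (W.pts i).2)
    W.abs_sub_snd_le_one (Fin.zero_le m) (by simpa [W.start_eq] using hc₀) (hm ▸ hc)
  exact ⟨j, hjm.trans_le hmk, hj⟩

lemma exists_lt_fst_eq {k : Fin (n + 1)} {c : ℤ} (hc₁ : W.xmin k < c) (hc₂ : c < W.xmax k) :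
    ∃ j < k, (W.pts j).1 = c := by
  obtain ⟨a, hak, ha⟩ := W.exists_fst_eq_xmin k
  obtain ⟨b, hbk, hb⟩ := W.exists_fst_eq_xmax k
  exact exists_lt_apply_eq_of_lt_of_lt (f := fun i => (W.pts i).1) W.abs_sub_fst_le_one
    hak hbk (ha ▸ hc₁) (hb ▸ hc₂)

variable {W}

lemma Prudent.injective (hP : W.Prudent) : Function.Injective W.pts := by
  refine Function.Injective.of_lt_imp_ne fun j k hjk => ?_
  obtain ⟨k, rfl⟩ := Fin.exists_succ_eq.2 (Fin.ne_zero_of_lt hjk)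
  simpa using hP k 1 le_rfl j (Fin.le_castSucc_iff.2 hjk)

lemma Prudent.ne_add_smul (hP : W.Prudent) (k : Fin n) {j : Fin (n + 1)} (hj : j < k.castSucc)
    {t : ℤ} (ht : 0 ≤ t) :
    W.pts j ≠ W.pts k.castSucc + t • (W.pts k.succ - W.pts k.castSucc) := by
  rcases ht.eq_or_lt with rfl | ht
  · simpa using hP.injective.ne hj.ne
  · exact hP k t ht j hj.le

lemma Prudent.not_step_east_of_west (hP : W.Prudent) (k : Fin n)
    (hstep : W.pts k.succ - W.pts k.castSucc = (1, 0)) (hy : 0 ≤ (W.pts k.castSucc).2)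
    (hN : (W.pts k.castSucc).2 < W.ymax k.castSucc)
    (hW : (W.pts k.castSucc).1 = W.xmin k.castSucc) : False := by
  obtain ⟨j, hjk, hj⟩ := W.exists_lt_snd_eq hy hN
  have ht : 0 ≤ (W.pts j).1 - (W.pts k.castSucc).1 := sub_nonneg.2 (hW ▸ xmin_le hjk.le)
  refine hP.ne_add_smul k hjk ht ?_
  rw [hstep]
  ext <;> simp [hj]

lemma Prudent.not_step_west_of_east (hP : W.Prudent) (k : Fin n)
    (hstep : W.pts k.succ - W.pts k.castSucc = (-1, 0)) (hy : 0 ≤ (W.pts k.castSucc).2)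
    (hN : (W.pts k.castSucc).2 < W.ymax k.castSucc)
    (hE : (W.pts k.castSucc).1 = W.xmax k.castSucc) : False := by
  obtain ⟨j, hjk, hj⟩ := W.exists_lt_snd_eq hy hN
  have ht : 0 ≤ (W.pts k.castSucc).1 - (W.pts j).1 := sub_nonneg.2 (hE ▸ le_xmax hjk.le)
  refine hP.ne_add_smul k hjk ht ?_
  rw [hstep]
  ext <;> simp [hj]

lemma Prudent.not_step_south_of_north (hP : W.Prudent) (k : Fin n)
    (hstep : W.pts k.succ - W.pts k.castSucc = (0, -1))
    (hN : (W.pts k.castSucc).2 = W.ymax k.castSucc)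
    (hW : W.xmin k.castSucc < (W.pts k.castSucc).1)
    (hE : (W.pts k.castSucc).1 < W.xmax k.castSucc) : False := by
  obtain ⟨j, hjk, hj⟩ := W.exists_lt_fst_eq hW hE
  have ht : 0 ≤ (W.pts k.castSucc).2 - (W.pts j).2 := sub_nonneg.2 (hN ▸ le_ymax hjk.le)
  refine hP.ne_add_smul k hjk ht ?_
  rw [hstep]
  ext <;> simp [hj]

lemma Prudent.ymax_le_or_xmax_le_or_le_xmin (hP : W.Prudent) (hH : W.HalfPlane) (k : Fin n)
    (hk : (W.pts k.castSucc).2 = W.ymax k.castSucc ∨ (W.pts k.castSucc).1 = W.xmax k.castSucc ∨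
      (W.pts k.castSucc).1 = W.xmin k.castSucc) :
    W.ymax k.castSucc ≤ (W.pts k.succ).2 ∨ W.xmax k.castSucc ≤ (W.pts k.succ).1 ∨
      (W.pts k.succ).1 ≤ W.xmin k.castSucc := by
  have hxmax : (W.pts k.castSucc).1 ≤ W.xmax k.castSucc := le_xmax le_rfl
  have hxmin : W.xmin k.castSucc ≤ (W.pts k.castSucc).1 := xmin_le le_rfl
  have hymax : (W.pts k.castSucc).2 ≤ W.ymax k.castSucc := le_ymax le_rfl
  by_contra! hout
  rcases adj_iff_sub_eq.1 (W.adj_step k) with h | h | h | h <;>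
    have ⟨h₁, h₂⟩ := Prod.ext_iff.1 h <;> simp only [Prod.fst_sub, Prod.snd_sub] at h₁ h₂
  · exact hP.not_step_east_of_west k h (hH _) (by omega) (by omega)
  · exact hP.not_step_west_of_east k h (hH _) (by omega) (by omega)
  · omega
  · exact hP.not_step_south_of_north k h (by omega) (by omega) (by omega)

theorem Prudent.threeSidedEnds (hP : W.Prudent) (hH : W.HalfPlane) : W.ThreeSidedEnds := by
  intro k
  induction k using Fin.induction with
  | zero => exact Or.inl W.ymax_zero.symm
  | succ k ih =>
    have := hP.ymax_le_or_xmax_le_or_le_xmin hH k ih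
    rw [ymax_succ, xmax_succ, xmin_succ]
    omega

end Walk

/-- Every prudent walk on `ℤ²` starting on the line `y = 0`
and confined to the half-plane `y ≥ 0` ends on the north, east or west side of
its bounding box (its endpoint is never strictly in the interior of the south
side).  The same applies to every prefix, so every 4-sided prudent walk above
an impenetrable surface also ends on the north, east or west side of its
bounding box at every step, as a 3-sided prudent walk does. -/
theorem halfplane_prudent_ends_north_east_west {n : ℕ} (W : Walk n)
    (hP : W.Prudent) (hH : W.HalfPlane) :
    ((W.endPt).2 = W.ymax (Fin.last n) ∨ (W.endPt).1 = W.xmax (Fin.last n) ∨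
      (W.endPt).1 = W.xmin (Fin.last n)) ∧
    W.ThreeSidedEnds :=
  have h := hP.threeSidedEnds hH
  ⟨h (Fin.last n), h⟩

end PrudentAdsorption
end
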